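/- Consider the two-player strategic game H in which both strategy sets are T₁ = T₂ = {k : ℤ | k ≥ −1}, with payoffs: for k, ℓ ≥ 0, p₁(k, ℓ) = ℓ + 1 if k = ℓ + 1 and 0 otherwise, and p₂(k, ℓ) = k if k = ℓ and 0 otherwise; p₁(−1, ℓ) = ℓ + 1 for all ℓ ≥ −1; p₁(k, −1) = k for all k ≥ 0; p₂(k, −1) = k for all k ≥ −1; p₂(−1, ℓ) = ℓ for all ℓ ≥ 0. Then, with the pure belief structure, GR̄^ω = ({−1}, {−1}) and GR̄^{ω+1} = (∅, ∅); in particular the closure ordinal of GR̄ is strictly greater than ω. -/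

import Mathlib

universe u

/-- Transfinite iterations of an operator on a complete lattice:
`F^0 = ⊤`, `F^(α+1) = F (F^α)`, and `F^β = ⨅_{α<β} F^α` for limit `β`. -/
noncomputable def iterate {D : Type u} [CompleteLattice D] (F : D → D) (α : Ordinal.{0}) : D :=
  Ordinal.limitRecOn α ⊤ (fun _ ih => F ih) (fun β _ ih => ⨅ (γ : Ordinal) (h : γ < β), ih γ h)

/-- `R` is a relaxation of `F`. -/
def Relaxation {D : Type u} [CompleteLattice D] (F R : D → D) : Prop :=
  ∀ α : Ordinal.{0},
    F (iterate R α) ≤ R (iterate R α) ∧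
    (F (iterate R α) ≤ iterate R α → R (iterate R α) ≤ iterate R α) ∧
    (R (iterate R α) = iterate R α → F (iterate R α) = iterate R α)

section Games

variable {n : ℕ} {T : Fin n → Type u}

/-- `GR` operator: strategies that are a best response *in the initial game* to
some opponent belief held in `G`. -/
def GR (p : ∀ i : Fin n, (∀ j, T j) → ℝ) (G : ∀ i, Set (T i)) : ∀ i, Set (T i) :=
  fun i => {s : T i | ∃ μ : ∀ j, T j, (∀ j, j ≠ i → μ j ∈ G j) ∧
    ∀ s' : T i, p i (Function.update μ i s') ≤ p i (Function.update μ i s)}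

/-- `LR` operator: strategies that are a best response *in `G`* to
some opponent belief held in `G`. -/
def LR (p : ∀ i : Fin n, (∀ j, T j) → ℝ) (G : ∀ i, Set (T i)) : ∀ i, Set (T i) :=
  fun i => {s : T i | ∃ μ : ∀ j, T j, (∀ j, j ≠ i → μ j ∈ G j) ∧
    ∀ s' ∈ G i, p i (Function.update μ i s') ≤ p i (Function.update μ i s)}

/-- `s'` strictly dominates `s` on the restriction `G`. -/
def Dom (p : ∀ i : Fin n, (∀ j, T j) → ℝ) (G : ∀ i, Set (T i)) (i : Fin n)
    (s' s : T i) : Prop :=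
  ∀ μ : ∀ j, T j, (∀ j, j ≠ i → μ j ∈ G j) →
    p i (Function.update μ i s) < p i (Function.update μ i s')

/-- `GS` operator: strategies not strictly dominated on `G` by any strategy of the initial game. -/
def GS (p : ∀ i : Fin n, (∀ j, T j) → ℝ) (G : ∀ i, Set (T i)) : ∀ i, Set (T i) :=
  fun i => {s : T i | ¬ ∃ s' : T i, Dom p G i s' s}

/-- `LS` operator: strategies not strictly dominated on `G` by any strategy in `G`. -/
def LS (p : ∀ i : Fin n, (∀ j, T j) → ℝ) (G : ∀ i, Set (T i)) : ∀ i, Set (T i) :=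
  fun i => {s : T i | ¬ ∃ s' ∈ G i, Dom p G i s' s}

/-- Property B: to each belief in the initial game a best response (in the initial game) exists. -/
def PropB (p : ∀ i : Fin n, (∀ j, T j) → ℝ) : Prop :=
  ∀ (i : Fin n) (μ : ∀ j, T j), ∃ s : T i, ∀ s' : T i,
    p i (Function.update μ i s') ≤ p i (Function.update μ i s)

/-- Property D(α). -/
def PropD (p : ∀ i : Fin n, (∀ j, T j) → ℝ) (α : Ordinal.{0}) : Prop :=
  ∀ R : (∀ i, Set (T i)) → (∀ i, Set (T i)), Relaxation (fun G => LS p G ⊓ G) R →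
    ∀ (i : Fin n) (s : T i), (∃ s' : T i, Dom p (iterate R α) i s' s) →
      ∃ s' ∈ iterate R α i, Dom p (iterate R α) i s' s

/-- Property C(α). -/
def PropC (p : ∀ i : Fin n, (∀ j, T j) → ℝ) (α : Ordinal.{0}) : Prop :=
  ∀ R : (∀ i, Set (T i)) → (∀ i, Set (T i)), Relaxation (fun G => LS p G ⊓ G) R →
    ∀ (i : Fin n) (s : T i), (∃ s' : T i, Dom p (iterate R α) i s' s) →
      ∃ s'' : T i, Dom p (iterate R α) i s'' s ∧ ¬ ∃ s' : T i, Dom p (iterate R α) i s' s''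

end Games

set_option linter.unusedVariables false

noncomputable def p7 (i : Fin 2) (s : ∀ _ : Fin 2, {k : ℤ // -1 ≤ k}) : ℝ :=
  ((if i = 0 then
      (if (s 0 : ℤ) = -1 then (s 1 : ℤ) + 1
       else if (s 1 : ℤ) = -1 then (s 0 : ℤ)
       else if (s 0 : ℤ) = (s 1 : ℤ) + 1 then (s 1 : ℤ) + 1 else 0)
    else
      (if (s 1 : ℤ) = -1 then (s 0 : ℤ)
       else if (s 0 : ℤ) = -1 then (s 1 : ℤ)
       else if (s 0 : ℤ) = (s 1 : ℤ) then (s 0 : ℤ) else 0) : ℤ) : ℝ)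

/-!
Write `tailFrom m = {-1} ∪ {s | m ≤ s}` and `stage a b = (tailFrom a, tailFrom b)`. Against a belief
`ℓ ≥ 0` the best responses of player `0` are exactly `-1` and `ℓ + 1`; against `k ≥ 1` those of
player `1` are exactly `-1` and `k`, and against `k = 0` every strategy is one; against the belief
`-1` neither player has a best response, since the payoff grows without bound. Hence `GR` sends
`stage a b` to `stage (b + 1) a`, and the `n`-th iterate of `GR̄` is `stage ⌈n/2⌉ ⌊n/2⌋`. These
strictly decrease to `({-1}, {-1})` at `ω`, which holds no belief admitting a best response, so the
next step is empty.
-/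

section Iterate

variable {D : Type u} [CompleteLattice D] (F : D → D)

lemma iterate_zero : iterate F 0 = ⊤ :=
  Ordinal.limitRecOn_zero _ _ _

lemma iterate_succ (α : Ordinal.{0}) : iterate F (α + 1) = F (iterate F α) :=
  Ordinal.limitRecOn_add_one _ _ _ _

lemma iterate_limit {β : Ordinal.{0}} (hβ : Order.IsSuccLimit β) :
    iterate F β = ⨅ (γ : Ordinal) (_ : γ < β), iterate F γ :=
  Ordinal.limitRecOn_limit _ _ _ _ hβ

lemma iterate_natCast (n : ℕ) : iterate F n = F^[n] ⊤ := by
  induction n with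
  | zero => exact iterate_zero F
  | succ n ih => rw [Nat.cast_succ, iterate_succ, ih, Function.iterate_succ_apply']

lemma iterate_omega0 : iterate F Ordinal.omega0 = ⨅ n : ℕ, iterate F n := by
  rw [iterate_limit F Ordinal.isSuccLimit_omega0]
  refine le_antisymm (le_iInf fun n => iInf₂_le (n : Ordinal) (Ordinal.natCast_lt_omega0 n)) ?_
  refine le_iInf₂ fun γ hγ => ?_
  obtain ⟨n, rfl⟩ := Ordinal.lt_omega0.mp hγ
  exact iInf_le _ n

end Iterate

section TwoPlayer

variable {α : Type u} (p : Fin 2 → (Fin 2 → α) → ℝ) (G : Fin 2 → Set α)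

lemma update_zero_fin_two (μ : Fin 2 → α) (s : α) : Function.update μ 0 s = ![s, μ 1] := by
  funext j
  fin_cases j <;> rfl

lemma update_one_fin_two (μ : Fin 2 → α) (s : α) : Function.update μ 1 s = ![μ 0, s] := by
  funext j
  fin_cases j <;> rfl

lemma mem_GR_zero_iff (s : α) :
    s ∈ GR p G 0 ↔ ∃ t ∈ G 1, ∀ s', p 0 ![s', t] ≤ p 0 ![s, t] := by
  constructor
  · rintro ⟨μ, hμ, hbest⟩
    exact ⟨μ 1, hμ 1 (by decide), by simpa only [update_zero_fin_two] using hbest⟩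
  · rintro ⟨t, ht, hbest⟩
    refine ⟨fun _ => t, fun j hj => ?_, by simpa only [update_zero_fin_two] using hbest⟩
    fin_cases j
    exacts [absurd rfl hj, ht]

lemma mem_GR_one_iff (s : α) :
    s ∈ GR p G 1 ↔ ∃ t ∈ G 0, ∀ s', p 1 ![t, s'] ≤ p 1 ![t, s] := by
  constructor
  · rintro ⟨μ, hμ, hbest⟩
    exact ⟨μ 0, hμ 0 (by decide), by simpa only [update_one_fin_two] using hbest⟩
  · rintro ⟨t, ht, hbest⟩
    refine ⟨fun _ => t, fun j hj => ?_, by simpa only [update_one_fin_two] using hbest⟩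
    fin_cases j
    exacts [ht, absurd rfl hj]

end TwoPlayer

namespace P7

abbrev Strategy : Type := {k : ℤ // -1 ≤ k}

lemma isBestResponse_zero_iff (s t : Strategy) :
    (∀ s', p7 0 ![s', t] ≤ p7 0 ![s, t]) ↔ 0 ≤ (t : ℤ) ∧ ((s : ℤ) = -1 ∨ (s : ℤ) = t + 1) := by
  obtain ⟨s, hs⟩ := s
  obtain ⟨t, ht⟩ := t
  simp only [p7, Matrix.cons_val_zero, Matrix.cons_val_one, if_true, Int.cast_le,
    Subtype.forall]
  constructor
  · -- comparing with `-1` and with `s + 2` already pins `s` down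
    intro h
    have h1 := h (s + 2) (by omega)
    have h2 := h (-1) le_rfl
    split_ifs at h1 h2 <;> omega
  · rintro ⟨h0, hcase⟩ s' hs'
    split_ifs <;> omega

lemma isBestResponse_one_iff (s t : Strategy) :
    (∀ s', p7 1 ![t, s'] ≤ p7 1 ![t, s]) ↔
      0 ≤ (t : ℤ) ∧ ((t : ℤ) = 0 ∨ (s : ℤ) = -1 ∨ (s : ℤ) = t) := by
  obtain ⟨s, hs⟩ := s
  obtain ⟨t, ht⟩ := t
  simp only [p7, Matrix.cons_val_zero, Matrix.cons_val_one, Fin.one_eq_zero_iff,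
    Int.cast_le, Subtype.forall]
  constructor
  · intro h
    have h1 := h (s + 2) (by omega)
    have h2 := h (-1) le_rfl
    split_ifs at h1 h2 <;> omega
  · rintro ⟨h0, hcase⟩ s' hs'
    split_ifs <;> omega

lemma mem_GR_p7_zero_iff (G : Fin 2 → Set Strategy) (s : Strategy) :
    s ∈ GR p7 G 0 ↔ ∃ t ∈ G 1, 0 ≤ (t : ℤ) ∧ ((s : ℤ) = -1 ∨ (s : ℤ) = t + 1) := by
  simp only [mem_GR_zero_iff, isBestResponse_zero_iff]

lemma mem_GR_p7_one_iff (G : Fin 2 → Set Strategy) (s : Strategy) :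
    s ∈ GR p7 G 1 ↔ ∃ t ∈ G 0, 0 ≤ (t : ℤ) ∧ ((t : ℤ) = 0 ∨ (s : ℤ) = -1 ∨ (s : ℤ) = t) := by
  simp only [mem_GR_one_iff, isBestResponse_one_iff]

def tailFrom (m : ℕ) : Set Strategy := {s | (s : ℤ) = -1 ∨ (m : ℤ) ≤ s}

lemma tailFrom_zero : tailFrom 0 = Set.univ :=
  Set.eq_univ_of_forall fun s => by simp only [tailFrom, Set.mem_ofPred_eq]; omega

lemma tailFrom_antitone : Antitone tailFrom := fun _ _ hmk _ hs => by
  simp only [tailFrom, Set.mem_ofPred_eq] at hs ⊢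
  omega

lemma tailFrom_injective : Function.Injective tailFrom := by
  intro j m h
  have hj : (⟨j, by omega⟩ : Strategy) ∈ tailFrom m := h ▸ Or.inr le_rfl
  have hm : (⟨m, by omega⟩ : Strategy) ∈ tailFrom j := h ▸ Or.inr le_rfl
  simp only [tailFrom, Set.mem_ofPred_eq] at hj hm
  omega

lemma iInf_tailFrom {g : ℕ → ℕ} (hg : ∀ m, ∃ n, m ≤ g n) :
    ⨅ n, tailFrom (g n) = {s : Strategy | (s : ℤ) = -1} := by
  ext s
  simp only [tailFrom, Set.iInf_eq_iInter, Set.mem_iInter, Set.mem_ofPred_eq]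
  refine ⟨fun h => ?_, fun h n => Or.inl h⟩
  obtain ⟨n, hn⟩ := hg ((s : ℤ).toNat + 1)
  have := h n
  omega

def stage (a b : ℕ) : Fin 2 → Set Strategy := ![tailFrom a, tailFrom b]

lemma GR_p7_stage (a b : ℕ) : GR p7 (stage a b) = stage (b + 1) a := by
  funext i
  fin_cases i
  · ext s
    simp only [Fin.zero_eta, mem_GR_p7_zero_iff, stage, Matrix.cons_val_zero, Matrix.cons_val_one]
    constructor
    · rintro ⟨t, ht, ht0, hs⟩
      simp only [tailFrom, Set.mem_ofPred_eq] at ht ⊢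
      omega
    · rintro (hs | hs)
      · exact ⟨⟨b, by omega⟩, Or.inr le_rfl, by simp, Or.inl hs⟩
      · push_cast at hs
        exact ⟨⟨s - 1, by omega⟩, Or.inr (show (b : ℤ) ≤ s - 1 by omega),
          show (0 : ℤ) ≤ s - 1 by omega, Or.inr (by ring)⟩
  · ext s
    simp only [Fin.mk_one, mem_GR_p7_one_iff, stage, Matrix.cons_val_zero, Matrix.cons_val_one]
    constructor
    · rintro ⟨t, ht, ht0, hs⟩
      have := s.2
      simp only [tailFrom, Set.mem_ofPred_eq] at ht ⊢
      omega
    · rintro (hs | hs)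
      · exact ⟨⟨a, by omega⟩, Or.inr le_rfl, by simp, Or.inr (Or.inl hs)⟩
      · exact ⟨s, Or.inr hs, by omega, Or.inr (Or.inr rfl)⟩

lemma stage_le_stage {a b c d : ℕ} (hca : c ≤ a) (hdb : d ≤ b) : stage a b ≤ stage c d := by
  intro i
  fin_cases i
  exacts [tailFrom_antitone hca, tailFrom_antitone hdb]

lemma stage_injective {a b c d : ℕ} (h : stage a b = stage c d) : a = c ∧ b = d :=
  ⟨tailFrom_injective (congrFun h 0), tailFrom_injective (congrFun h 1)⟩

lemma GR_p7_inf_stage {a b : ℕ} (hba : b ≤ a) (hab : a ≤ b + 1) :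
    GR p7 (stage a b) ⊓ stage a b = stage (b + 1) a := by
  rw [GR_p7_stage]
  exact inf_eq_left.mpr (stage_le_stage hab hba)

lemma iterate_GR_p7_inf_natCast (n : ℕ) :
    iterate (fun G => GR p7 G ⊓ G) (n : Ordinal) = stage ((n + 1) / 2) (n / 2) := by
  rw [iterate_natCast]
  induction n with
  | zero =>
    funext i
    fin_cases i <;> exact tailFrom_zero.symm
  | succ n ih =>
    rw [Function.iterate_succ_apply', ih, GR_p7_inf_stage (by omega) (by omega),
      show n / 2 + 1 = (n + 1 + 1) / 2 by omega]

lemma iterate_GR_p7_inf_omega0 :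
    iterate (fun G => GR p7 G ⊓ G) Ordinal.omega0 = fun _ => {s : Strategy | (s : ℤ) = -1} := by
  rw [iterate_omega0]
  simp_rw [iterate_GR_p7_inf_natCast]
  funext i
  rw [iInf_apply]
  fin_cases i
  exacts [iInf_tailFrom fun m => ⟨2 * m, by omega⟩, iInf_tailFrom fun m => ⟨2 * m, by omega⟩]

lemma GR_p7_minusOne : GR p7 (fun _ => {s : Strategy | (s : ℤ) = -1}) = ⊥ := by
  funext i
  refine Set.eq_empty_of_forall_notMem fun s hs => ?_
  fin_cases i
  · obtain ⟨t, ht, ht0, -⟩ := (mem_GR_p7_zero_iff _ s).mp hs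
    exact absurd ht (by simp only [Set.mem_ofPred_eq]; omega)
  · obtain ⟨t, ht, ht0, -⟩ := (mem_GR_p7_one_iff _ s).mp hs
    exact absurd ht (by simp only [Set.mem_ofPred_eq]; omega)

lemma iterate_GR_p7_inf_omega0_succ :
    iterate (fun G => GR p7 G ⊓ G) (Ordinal.omega0 + 1) = ⊥ := by
  rw [iterate_succ, iterate_GR_p7_inf_omega0, GR_p7_minusOne, bot_inf_eq]

lemma iterate_GR_p7_inf_succ_ne {α : Ordinal} (hα : α ≤ Ordinal.omega0) :
    iterate (fun G => GR p7 G ⊓ G) (α + 1) ≠ iterate (fun G => GR p7 G ⊓ G) α := by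
  rcases hα.lt_or_eq with hlt | rfl
  · obtain ⟨n, rfl⟩ := Ordinal.lt_omega0.mp hlt
    rw [← Nat.cast_succ, iterate_GR_p7_inf_natCast, iterate_GR_p7_inf_natCast]
    intro h
    have := stage_injective h
    omega
  · rw [iterate_GR_p7_inf_omega0_succ, iterate_GR_p7_inf_omega0]
    intro h
    exact (congrFun h 0).symm.subset (show (⟨-1, le_rfl⟩ : Strategy) ∈ _ from rfl)

end P7

theorem stmt_7 :
    iterate (fun G => GR p7 G ⊓ G) Ordinal.omega0
        = (fun _ : Fin 2 => {s : {k : ℤ // -1 ≤ k} | (s : ℤ) = -1}) ∧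
    iterate (fun G => GR p7 G ⊓ G) (Ordinal.omega0 + 1) = ⊥ ∧
    ∀ α ≤ Ordinal.omega0,
      iterate (fun G => GR p7 G ⊓ G) (α + 1) ≠ iterate (fun G => GR p7 G ⊓ G) α :=
  ⟨P7.iterate_GR_p7_inf_omega0, P7.iterate_GR_p7_inf_omega0_succ,
    fun _ => P7.iterate_GR_p7_inf_succ_ne⟩
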